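/- Let Z follow the k-dimensional extended skew-normal distribution ESN_k(0, Ω̄, α, τ), i.e. with density f(z) = φ_k(z; Ω̄) · Φ(α₀ + αᵀz)/Φ(τ), where Ω̄ is a full-rank correlation matrix, α ∈ ℝᵏ, and α₀ = τ√(1 + αᵀΩ̄α). Then E[ζ₁(α₀ + αᵀZ)] = ζ₁(τ)/√(1 + αᵀΩ̄α), where ζ₁(x) = φ(x)/Φ(x). -/

import Mathlib

/-!
Since `φ(x) φ_k(z; Ω̄) ∝ exp(-½ (zᵀΩ̄⁻¹z + x²))` and `x = α₀ + αᵀz` is affine in `z`, completing the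
square turns `φ(α₀ + αᵀz) φ_k(z; Ω̄)` into `φ(α₀ / √(1 + αᵀΩ̄α))` times an unnormalised Gaussian
kernel with precision matrix `Ω̄⁻¹ + ααᵀ`. By the matrix determinant lemma that matrix has
determinant `(1 + αᵀΩ̄α) / det Ω̄`, so the integral is `φ(τ) / √(1 + αᵀΩ̄α)`. The factor
`Φ(α₀ + αᵀz)` of the ESN density cancels against the denominator of `ζ₁`, leaving `Φ(τ)`.
-/

open Matrix MeasureTheory Real

noncomputable def phi (x : ℝ) : ℝ := (Real.sqrt (2 * Real.pi))⁻¹ * Real.exp (-x ^ 2 / 2)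

noncomputable def Phi (x : ℝ) : ℝ := ∫ t in Set.Iic x, phi t

noncomputable def zeta1 (x : ℝ) : ℝ := phi x / Phi x

/-- Density of `N_k(0, Ω)`. -/
noncomputable def gaussPdf {k : ℕ} (Ω : Matrix (Fin k) (Fin k) ℝ) (z : Fin k → ℝ) : ℝ :=
  (2 * Real.pi) ^ (-(k : ℝ) / 2) * Ω.det ^ (-(1 : ℝ) / 2) *
    Real.exp (-(1 / 2) * (z ⬝ᵥ Ω⁻¹ *ᵥ z))

/-- Density of `ESN_k(0, Ω̄, α, τ)`. -/
noncomputable def esnPdf {k : ℕ} (Ωb : Matrix (Fin k) (Fin k) ℝ) (α : Fin k → ℝ) (τ : ℝ)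
    (z : Fin k → ℝ) : ℝ :=
  gaussPdf Ωb z * Phi (τ * Real.sqrt (1 + α ⬝ᵥ Ωb *ᵥ α) + α ⬝ᵥ z) / Phi τ

section

variable {ι : Type*} [Fintype ι]

theorem Matrix.PosSemidef.one_add_dotProduct_mulVec_pos {Ω : Matrix ι ι ℝ} (hΩ : Ω.PosSemidef)
    (α : ι → ℝ) : 0 < 1 + α ⬝ᵥ Ω *ᵥ α := by
  have := hΩ.dotProduct_mulVec_nonneg α
  rw [star_trivial] at this
  linarith

theorem integral_exp_neg_half_dotProduct_self :
    ∫ v : ι → ℝ, exp (-(1 / 2) * (v ⬝ᵥ v)) = √(2 * π) ^ Fintype.card ι := by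
  have h_prod (v : ι → ℝ) : exp (-(1 / 2) * (v ⬝ᵥ v)) = ∏ i, exp (-(1 / 2) * v i ^ 2) := by
    simp only [← exp_sum, dotProduct, Finset.mul_sum, sq]
  simp_rw [h_prod]
  rw [integral_fintype_prod_volume_eq_pow (fun x : ℝ => exp (-(1 / 2) * x ^ 2)), integral_gaussian]
  norm_num [div_div_eq_mul_div, mul_comm]

variable [DecidableEq ι]

open scoped MatrixOrder in
theorem Matrix.PosDef.exists_isSymm_mul_self_eq {B : Matrix ι ι ℝ} (hB : B.PosDef) :
    ∃ C : Matrix ι ι ℝ, C.IsSymm ∧ C * C = B ∧ C.det = √B.det := by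
  have hC : (CFC.sqrt B).PosSemidef := (CFC.sqrt_nonneg B).posSemidef
  have hCC : CFC.sqrt B * CFC.sqrt B = B := CFC.sqrt_mul_sqrt_self B hB.posSemidef.nonneg
  have hdet : (CFC.sqrt B).det * (CFC.sqrt B).det = B.det := by rw [← det_mul, hCC]
  refine ⟨CFC.sqrt B, isHermitian_iff_isSymm.mp hC.1, hCC, ?_⟩
  rw [← hdet, Real.sqrt_mul_self hC.det_nonneg]

theorem det_inv_add_vecMulVec_self {Ω : Matrix ι ι ℝ} (hΩ : IsUnit Ω.det) (α : ι → ℝ) :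
    (Ω⁻¹ + vecMulVec α α).det = Ω.det⁻¹ * (1 + α ⬝ᵥ Ω *ᵥ α) := by
  have hΩinv : IsUnit Ω⁻¹.det := isUnit_nonsing_inv_det_iff.mpr hΩ
  rw [vecMulVec_eq Unit, det_add_replicateCol_mul_replicateRow hΩinv, nonsing_inv_nonsing_inv _ hΩ,
    det_nonsing_inv, Ring.inverse_eq_inv', det_unique (n := Unit), Matrix.mul_assoc,
    ← replicateCol_mulVec]
  simp [replicateRow_mul_replicateCol_apply]

theorem dotProduct_inv_mulVec_add_sq {Ω : Matrix ι ι ℝ} (hΩ : Ω.IsSymm) (hdet : IsUnit Ω.det)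
    (α z : ι → ℝ) (c : ℝ) (hq : 1 + α ⬝ᵥ Ω *ᵥ α ≠ 0) :
    z ⬝ᵥ Ω⁻¹ *ᵥ z + (c + α ⬝ᵥ z) ^ 2 =
      (z + (c / (1 + α ⬝ᵥ Ω *ᵥ α)) • (Ω *ᵥ α)) ⬝ᵥ (Ω⁻¹ + vecMulVec α α) *ᵥ
          (z + (c / (1 + α ⬝ᵥ Ω *ᵥ α)) • (Ω *ᵥ α)) + c ^ 2 / (1 + α ⬝ᵥ Ω *ᵥ α) := by
  set q := α ⬝ᵥ Ω *ᵥ α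
  set t := c / (1 + q)
  have h_left : Ω⁻¹ *ᵥ (Ω *ᵥ α) = α := by
    rw [mulVec_mulVec, nonsing_inv_mul _ hdet, one_mulVec]
  have h_right : (Ω *ᵥ α) ᵥ* Ω⁻¹ = α := by
    rw [← vecMul_transpose, hΩ.eq, vecMul_vecMul, mul_nonsing_inv _ hdet, vecMul_one]
  have h_dot : (Ω *ᵥ α) ⬝ᵥ α = q := dotProduct_comm _ _
  have hz_dot : z ⬝ᵥ α = α ⬝ᵥ z := dotProduct_comm _ _
  have hz_left : (Ω *ᵥ α) ⬝ᵥ Ω⁻¹ *ᵥ z = α ⬝ᵥ z := by rw [dotProduct_mulVec, h_right]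
  simp only [add_mulVec, mulVec_add, mulVec_smul, vecMulVec_mulVec, dotProduct_add,
    add_dotProduct, dotProduct_smul, smul_dotProduct, h_left, hz_left, h_dot, hz_dot, smul_eq_mul,
    MulOpposite.smul_eq_mul_unop, MulOpposite.unop_op]
  have ht : t * (1 + q) = c := div_mul_cancel₀ c hq
  have ht_sq : c ^ 2 / (1 + q) = c * t := by ring
  linear_combination (-2 * (α ⬝ᵥ z) - t * q - c) * ht - ht_sq

theorem integral_exp_neg_half_dotProduct_mulVec {B : Matrix ι ι ℝ} (hB : B.PosDef) :
    ∫ z : ι → ℝ, exp (-(1 / 2) * (z ⬝ᵥ B *ᵥ z)) = √(2 * π) ^ Fintype.card ι / √B.det := by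
  obtain ⟨C, hC_symm, hC_sq, hC_det⟩ := hB.exists_isSymm_mul_self_eq
  have hC_det_ne : C.det ≠ 0 := by rw [hC_det]; exact (sqrt_pos.mpr hB.det_pos).ne'
  have h_quad (z : ι → ℝ) : z ⬝ᵥ B *ᵥ z = (C *ᵥ z) ⬝ᵥ (C *ᵥ z) := by
    rw [← hC_sq, ← mulVec_mulVec, dotProduct_mulVec, ← mulVec_transpose, hC_symm.eq]
  -- substitute `v = C z`, which scales Lebesgue measure by `|det C|⁻¹ = (√det B)⁻¹`
  have h_subst : ∫ z : ι → ℝ, exp (-(1 / 2) * ((C *ᵥ z) ⬝ᵥ (C *ᵥ z))) =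
      ∫ v : ι → ℝ, exp (-(1 / 2) * (v ⬝ᵥ v)) ∂(Measure.map (toLin' C) volume) := by
    rw [integral_map (toLin' C).continuous_of_finiteDimensional.aemeasurable (by fun_prop)]
    simp [toLin'_apply]
  simp_rw [h_quad]
  rw [h_subst, Real.map_matrix_volume_pi_eq_smul_volume_pi hC_det_ne, integral_smul_measure,
    integral_exp_neg_half_dotProduct_self, ENNReal.toReal_ofReal (abs_nonneg _), abs_inv,
    hC_det, abs_of_nonneg (sqrt_nonneg _), smul_eq_mul, inv_mul_eq_div]

end

lemma phi_pos (x : ℝ) : 0 < phi x := by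
  unfold phi
  positivity

lemma integrable_phi : Integrable phi := by
  have h := (integrable_exp_neg_mul_sq (b := 1 / 2) (by norm_num)).const_mul (√(2 * π))⁻¹
  convert h using 2 with x
  unfold phi
  ring_nf

lemma Phi_pos (x : ℝ) : 0 < Phi x := by
  have h_support : Function.support phi = Set.univ :=
    Set.eq_univ_of_forall fun t => (phi_pos t).ne'
  rw [Phi, setIntegral_pos_iff_support_of_nonneg_ae
    (Filter.Eventually.of_forall fun t => (phi_pos t).le) integrable_phi.integrableOn,
    h_support, Set.univ_inter]
  simp [Real.volume_Iic]

section GaussPdf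

variable {k : ℕ} {Ω : Matrix (Fin k) (Fin k) ℝ}

lemma gaussPdf_eq (hΩ : 0 < Ω.det) (z : Fin k → ℝ) :
    gaussPdf Ω z = (√(2 * π) ^ k * √Ω.det)⁻¹ * exp (-(1 / 2) * (z ⬝ᵥ Ω⁻¹ *ᵥ z)) := by
  have h_pi : (2 * π) ^ (-(k : ℝ) / 2) = (√(2 * π) ^ k)⁻¹ := by
    rw [sqrt_eq_rpow, ← rpow_natCast, ← rpow_mul (by positivity), ← rpow_neg (by positivity)]
    ring_nf
  have h_det : Ω.det ^ (-(1 : ℝ) / 2) = (√Ω.det)⁻¹ := by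
    rw [sqrt_eq_rpow, ← rpow_neg hΩ.le]
    ring_nf
  rw [gaussPdf, h_pi, h_det, mul_inv]

theorem integral_gaussPdf_mul_phi (hΩ : Ω.PosDef) (α : Fin k → ℝ) (c : ℝ) :
    ∫ z, gaussPdf Ω z * phi (c + α ⬝ᵥ z) =
      phi (c / √(1 + α ⬝ᵥ Ω *ᵥ α)) / √(1 + α ⬝ᵥ Ω *ᵥ α) := by
  set q := α ⬝ᵥ Ω *ᵥ α
  have hq : 0 < 1 + q := hΩ.posSemidef.one_add_dotProduct_mulVec_pos α
  set s := √(1 + q)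
  have hdet := hΩ.det_pos
  set B := Ω⁻¹ + vecMulVec α α
  have hB : B.PosDef := hΩ.inv.add_posSemidef (posSemidef_vecMulVec_self_star α)
  set m := (c / (1 + q)) • (Ω *ᵥ α)
  set K := (√(2 * π) ^ k * √Ω.det)⁻¹ * phi (c / s)
  have h_point (z : Fin k → ℝ) :
      gaussPdf Ω z * phi (c + α ⬝ᵥ z) = K * exp (-(1 / 2) * ((z + m) ⬝ᵥ B *ᵥ (z + m))) := by
    have h_sq := dotProduct_inv_mulVec_add_sq (isHermitian_iff_isSymm.mp hΩ.isHermitian)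
      (isUnit_iff_ne_zero.mpr hdet.ne') α z c hq.ne'
    have h_cs : (c / s) ^ 2 = c ^ 2 / (1 + q) := by rw [div_pow, sq_sqrt hq.le]
    have h_exp : exp (-(1 / 2) * (z ⬝ᵥ Ω⁻¹ *ᵥ z)) * phi (c + α ⬝ᵥ z) =
        phi (c / s) * exp (-(1 / 2) * ((z + m) ⬝ᵥ B *ᵥ (z + m))) := by
      rw [phi, phi, mul_left_comm, mul_assoc, ← exp_add, ← exp_add]
      congr 2
      linear_combination -(1 / 2) * h_sq + (1 / 2) * h_cs
    rw [gaussPdf_eq hdet, mul_assoc, h_exp, mul_assoc]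
  simp_rw [h_point]
  rw [integral_const_mul, integral_add_right_eq_self (fun w => exp (-(1 / 2) * (w ⬝ᵥ B *ᵥ w))),
    integral_exp_neg_half_dotProduct_mulVec hB, det_inv_add_vecMulVec_self
      (isUnit_iff_ne_zero.mpr hdet.ne'), sqrt_mul (inv_nonneg.mpr hdet.le), sqrt_inv]
  have h_sqrt_det : 0 < √Ω.det := sqrt_pos.mpr hdet
  simp only [K, s, q, Fintype.card_fin]
  field_simp

end GaussPdf

lemma zeta1_mul_esnPdf {k : ℕ} (Ωb : Matrix (Fin k) (Fin k) ℝ) (α : Fin k → ℝ) (τ : ℝ)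
    (z : Fin k → ℝ) :
    zeta1 (τ * √(1 + α ⬝ᵥ Ωb *ᵥ α) + α ⬝ᵥ z) * esnPdf Ωb α τ z =
      gaussPdf Ωb z * phi (τ * √(1 + α ⬝ᵥ Ωb *ᵥ α) + α ⬝ᵥ z) / Phi τ := by
  have hPhi := (Phi_pos (τ * √(1 + α ⬝ᵥ Ωb *ᵥ α) + α ⬝ᵥ z)).ne'
  rw [zeta1, esnPdf]
  field_simp

theorem esn_expectation_zeta1_general {k : ℕ} (Ωb : Matrix (Fin k) (Fin k) ℝ) (hΩ : Ωb.PosDef)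
    (α : Fin k → ℝ) (τ : ℝ) :
    ∫ z : Fin k → ℝ,
        zeta1 (τ * Real.sqrt (1 + α ⬝ᵥ Ωb *ᵥ α) + α ⬝ᵥ z) * esnPdf Ωb α τ z =
      zeta1 τ / Real.sqrt (1 + α ⬝ᵥ Ωb *ᵥ α) := by
  have hs : 0 < √(1 + α ⬝ᵥ Ωb *ᵥ α) :=
    sqrt_pos.mpr (hΩ.posSemidef.one_add_dotProduct_mulVec_pos α)
  simp_rw [zeta1_mul_esnPdf, integral_div, integral_gaussPdf_mul_phi hΩ,
    mul_div_cancel_right₀ τ hs.ne', zeta1]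
  ring

theorem esn_expectation_zeta1 {k : ℕ} (Ωb : Matrix (Fin k) (Fin k) ℝ) (hΩ : Ωb.PosDef)
    (hdiag : ∀ i, Ωb i i = 1) (α : Fin k → ℝ) (τ : ℝ) :
    ∫ z : Fin k → ℝ,
        zeta1 (τ * Real.sqrt (1 + α ⬝ᵥ Ωb *ᵥ α) + α ⬝ᵥ z) * esnPdf Ωb α τ z =
      zeta1 τ / Real.sqrt (1 + α ⬝ᵥ Ωb *ᵥ α) :=
  esn_expectation_zeta1_general Ωb hΩ α τ
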